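/- arXiv:2208.14058 — 5 statements merged into one kernel-verified Lean document; each statement's English description precedes it below -/
import Mathlib

section
/- Let X be a finite graph and Y ⊆ X a subset of its vertex set. For a subset J of the vertices, let J° = {i ∈ J : i has no neighbors in X − J} denote the interior of J, and let A(Y,X) be the set of subsets J ⊆ X such that no connected component of X − J is entirely contained in Y. Then, in the polynomial ring ℤ[q], one has ∑_{J ∈ A(Y,X)} (q−1)^{#(J − (Y ∩ J°))} · q^{#(Y ∩ J°)} = q^{#X}. -/
/-!
For `S ⊆ X` let `Φ S` (`admissibleClosure`) be `S` together with every connected component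
of `X − S` that lies inside `Y`. Then `Φ S ∈ A(Y,X)`, and for `J ∈ A(Y,X)` one has `Φ S = J`
exactly when `J − (Y ∩ J°) ⊆ S ⊆ J`. So the intervals `[J − (Y ∩ J°), J]`, `J ∈ A(Y,X)`,
partition the subsets of `X`. The term of `J` is `∑ (q − 1)^#S` over its interval, and summing
over all `S ⊆ X` gives `((q − 1) + 1)^#X`.
-/

open Finset Polynomial

lemma Finset.sum_pow_card_Icc_sdiff {ι R : Type*} [DecidableEq ι] [CommSemiring R] (a : R)
    {B J : Finset ι} (h : B ⊆ J) :
    ∑ S ∈ Icc (J \ B) J, a ^ #S = a ^ #(J \ B) * (a + 1) ^ #B := by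
  have hdisj : ∀ T ∈ B.powerset, Disjoint (J \ B) T := fun T hT =>
    disjoint_sdiff_self_left.mono_right (mem_powerset.1 hT)
  rw [Icc_eq_image_powerset sdiff_subset, sdiff_sdiff_eq_self h, ← sum_pow_mul_eq_add_pow,
    mul_sum, sum_image]
  · refine sum_congr rfl fun T hT => ?_
    rw [card_union_of_disjoint (hdisj T hT), pow_add, one_pow, mul_one]
  · intro T hT U hU (hTU : J \ B ∪ T = J \ B ∪ U)
    rw [← union_sdiff_cancel_left (hdisj T hT), hTU, union_sdiff_cancel_left (hdisj U hU)]

namespace SimpleGraph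

variable {V : Type*}

lemma Reachable.exists_reachable_induce_of_forall_adj {G : SimpleGraph V} {s t : Set V}
    (ht : ∀ a ∈ t, ∀ b ∈ s, G.Adj a b → b ∈ t) {a b : s}
    (h : (G.induce s).Reachable a b) (ha : ↑a ∈ t) :
    ∃ hb : ↑b ∈ t, (G.induce t).Reachable ⟨a, ha⟩ ⟨b, hb⟩ := by
  obtain ⟨p⟩ := h
  induction p with
  | nil => exact ⟨ha, .refl _⟩
  | @cons u v w huv _ ih =>
    have huv' : G.Adj u v := induce_adj.1 huv
    have hv : ↑v ∈ t := ht u ha v v.2 huv'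
    obtain ⟨hw, hvw⟩ := ih hv
    exact ⟨hw, (induce_adj.2 huv' : (G.induce t).Adj ⟨u, ha⟩ ⟨v, hv⟩).reachable.trans hvw⟩

variable (G : SimpleGraph V)

open Classical in
noncomputable def interiorVerts (J : Finset V) : Finset V :=
  J.filter fun i => ∀ j, G.Adj i j → j ∈ J

def IsAdmissible (Y J : Finset V) : Prop :=
  ∀ C : (G.induce {v : V | v ∉ J}).ConnectedComponent, ¬ ∀ v ∈ C.supp, (↑v : V) ∈ Y

open Classical in
noncomputable def trappedVerts [Fintype V] (Y S : Finset V) : Finset V :=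
  {v | ∃ h : v ∉ S, ∀ w : {x | x ∉ S}, (G.induce {x | x ∉ S}).Reachable ⟨v, h⟩ w → ↑w ∈ Y}

noncomputable def admissibleClosure [Fintype V] [DecidableEq V] (Y S : Finset V) : Finset V :=
  S ∪ G.trappedVerts Y S

variable {G}

lemma mem_interiorVerts {J : Finset V} {v : V} :
    v ∈ G.interiorVerts J ↔ v ∈ J ∧ ∀ j, G.Adj v j → j ∈ J := by
  simp [interiorVerts]

lemma interiorVerts_subset {J : Finset V} : G.interiorVerts J ⊆ J :=
  fun _ hv => (mem_interiorVerts.1 hv).1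

lemma isAdmissible_iff {Y J : Finset V} : G.IsAdmissible Y J ↔
    ∀ u : {v | v ∉ J}, ∃ w, (G.induce {v | v ∉ J}).Reachable u w ∧ ↑w ∉ Y := by
  simp only [IsAdmissible, ConnectedComponent.forall, ConnectedComponent.mem_supp_iff,
    ConnectedComponent.eq, not_forall, exists_prop]
  exact forall_congr' fun u => exists_congr fun w => and_congr_left' ⟨.symm, .symm⟩

variable [Fintype V] {Y S : Finset V}

lemma coe_mem_trappedVerts {u : {x | x ∉ S}} :
    ↑u ∈ G.trappedVerts Y S ↔ ∀ w, (G.induce {x | x ∉ S}).Reachable u w → ↑w ∈ Y := by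
  simp only [trappedVerts, mem_filter, mem_univ, true_and]
  exact ⟨fun ⟨_, h⟩ => h, fun h => ⟨u.2, h⟩⟩

lemma coe_mem_trappedVerts_of_reachable {u w : {x | x ∉ S}}
    (h : (G.induce {x | x ∉ S}).Reachable u w) (hu : ↑u ∈ G.trappedVerts Y S) :
    ↑w ∈ G.trappedVerts Y S :=
  coe_mem_trappedVerts.2 fun _ hw => coe_mem_trappedVerts.1 hu _ (h.trans hw)

lemma notMem_of_mem_trappedVerts {v : V} (hv : v ∈ G.trappedVerts Y S) : v ∉ S := by
  simp only [trappedVerts, mem_filter] at hv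
  exact hv.2.1

lemma mem_of_mem_trappedVerts {v : V} (hv : v ∈ G.trappedVerts Y S) : v ∈ Y :=
  (coe_mem_trappedVerts (u := ⟨v, notMem_of_mem_trappedVerts hv⟩)).1 hv _ (.refl _)

variable [DecidableEq V]

lemma isAdmissible_admissibleClosure : G.IsAdmissible Y (G.admissibleClosure Y S) := by
  refine isAdmissible_iff.2 fun ⟨u, hu⟩ => ?_
  simp only [admissibleClosure, Set.mem_ofPred_eq, mem_union, not_or] at hu
  obtain ⟨w, huw, hwY⟩ : ∃ w, (G.induce {x | x ∉ S}).Reachable ⟨u, hu.1⟩ w ∧ ↑w ∉ Y := by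
    by_contra! h
    exact hu.2 ((coe_mem_trappedVerts (u := ⟨u, hu.1⟩)).2 h)
  -- the trapped vertices form a union of components of `X − S`, so the walk avoids them
  have hclosed : ∀ a ∈ {x | x ∉ G.admissibleClosure Y S}, ∀ b ∈ {x | x ∉ S},
      G.Adj a b → b ∈ {x | x ∉ G.admissibleClosure Y S} := by
    intro a ha b hb hab
    simp only [admissibleClosure, Set.mem_ofPred_eq, mem_union, not_or] at ha hb ⊢
    refine ⟨hb, fun hbT => ha.2 ?_⟩
    exact coe_mem_trappedVerts_of_reachable (u := ⟨b, hb⟩) (w := ⟨a, ha.1⟩)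
      (induce_adj.2 hab.symm).reachable hbT
  obtain ⟨hw, huw'⟩ :=
    huw.exists_reachable_induce_of_forall_adj hclosed (by simpa [admissibleClosure] using hu)
  exact ⟨⟨w, hw⟩, huw', hwY⟩

lemma admissibleClosure_sdiff_subset :
    G.admissibleClosure Y S \ (Y ∩ G.interiorVerts (G.admissibleClosure Y S)) ⊆ S := by
  intro v hv
  by_contra hvS
  rw [mem_sdiff] at hv
  have hvT : v ∈ G.trappedVerts Y S := (mem_union.1 hv.1).resolve_left hvS
  refine hv.2 <| mem_inter.2
    ⟨mem_of_mem_trappedVerts hvT, mem_interiorVerts.2 ⟨hv.1, fun j hvj => ?_⟩⟩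
  by_cases hjS : j ∈ S
  · exact mem_union_left _ hjS
  · exact mem_union_right _ <| coe_mem_trappedVerts_of_reachable
      (u := ⟨v, hvS⟩) (w := ⟨j, hjS⟩) (induce_adj.2 hvj).reachable hvT

lemma admissibleClosure_eq {J : Finset V} (hJ : G.IsAdmissible Y J)
    (hlow : J \ (Y ∩ G.interiorVerts J) ⊆ S) (hup : S ⊆ J) : G.admissibleClosure Y S = J := by
  have hinner : ∀ v ∈ J, v ∉ S → v ∈ Y ∧ ∀ j, G.Adj v j → j ∈ J := fun v hvJ hvS => by
    by_contra h
    exact hvS (hlow (by simp [mem_interiorVerts, hvJ, h]))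
  have hcompl : {x | x ∉ J} ⊆ {x | x ∉ S} := fun x hxJ hxS => hxJ (hup hxS)
  refine Subset.antisymm (union_subset hup fun v hvT => ?_) fun v hvJ => ?_
  · by_contra hvJ
    obtain ⟨w, hvw, hwY⟩ := isAdmissible_iff.1 hJ ⟨v, hvJ⟩
    exact hwY ((coe_mem_trappedVerts (u := ⟨v, hcompl hvJ⟩)).1 hvT _
      (hvw.map (G.induceHomOfLE hcompl).toHom))
  · by_cases hvS : v ∈ S
    · exact mem_union_left _ hvS
    refine mem_union_right _ ((coe_mem_trappedVerts (u := ⟨v, hvS⟩)).2 fun w hvw => ?_)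
    -- `J − S ⊆ J°`, so no edge of `X − S` leaves `J − S`
    have hclosed : ∀ a ∈ {x | x ∈ J ∧ x ∉ S}, ∀ b ∈ {x | x ∉ S}, G.Adj a b →
        b ∈ {x | x ∈ J ∧ x ∉ S} := fun a ha b hb hab => ⟨(hinner a ha.1 ha.2).2 b hab, hb⟩
    obtain ⟨hw, -⟩ := hvw.exists_reachable_induce_of_forall_adj hclosed ⟨hvJ, hvS⟩
    exact (hinner w hw.1 hw.2).1

lemma admissibleClosure_eq_iff {J : Finset V} (hJ : G.IsAdmissible Y J) :
    G.admissibleClosure Y S = J ↔ S ∈ Icc (J \ (Y ∩ G.interiorVerts J)) J := by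
  rw [mem_Icc]
  refine ⟨?_, fun h => admissibleClosure_eq hJ h.1 h.2⟩
  rintro rfl
  exact ⟨admissibleClosure_sdiff_subset, subset_union_left⟩

end SimpleGraph

open Classical in
/-- Graph-theoretic identity: for a finite graph `G` on `V` and `Y ⊆ V`,
`∑_{J ∈ A(Y,X)} (q−1)^{#(J − (Y ∩ J°))} q^{#(Y ∩ J°)} = q^{#V}` in `ℤ[q]`, where
`J°` is the set of vertices of `J` with no neighbors outside `J`, and `A(Y,X)` is
the set of `J` such that no connected component of the induced graph on the
complement of `J` is contained in `Y`. -/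
theorem stmt0 {V : Type*} [Fintype V] [DecidableEq V] (G : SimpleGraph V)
    (Y : Finset V) :
    ∑ J ∈ Finset.univ.powerset.filter (fun J : Finset V =>
        ∀ C : (G.induce {v : V | v ∉ J}).ConnectedComponent,
          ¬ ∀ v ∈ C.supp, (↑v : V) ∈ Y),
      (((Polynomial.X : Polynomial ℤ) - 1) ^
            (J \ (Y ∩ J.filter fun i => ∀ j, G.Adj i j → j ∈ J)).card *
          (Polynomial.X : Polynomial ℤ) ^
            (Y ∩ J.filter fun i => ∀ j, G.Adj i j → j ∈ J).card)
      = (Polynomial.X : Polynomial ℤ) ^ Fintype.card V := by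
  have hA : (univ.powerset.filter fun J : Finset V =>
      ∀ C : (G.induce {v : V | v ∉ J}).ConnectedComponent, ¬ ∀ v ∈ C.supp, (↑v : V) ∈ Y) =
      univ.filter fun J => G.IsAdmissible Y J := by
    ext J
    simp only [powerset_univ, mem_filter]
    rfl
  have hinterior (J : Finset V) :
      J.filter (fun i => ∀ j, G.Adj i j → j ∈ J) = G.interiorVerts J := by
    ext
    simp [SimpleGraph.mem_interiorVerts]
  simp only [hA, hinterior]
  calc _ = ∑ J with G.IsAdmissible Y J,
        ∑ S with G.admissibleClosure Y S = J, (X - 1 : ℤ[X]) ^ #S := by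
        refine sum_congr rfl fun J hJ => ?_
        rw [filter_congr fun S _ => SimpleGraph.admissibleClosure_eq_iff (mem_filter.1 hJ).2,
          filter_univ_mem, sum_pow_card_Icc_sdiff _ (inter_subset_right.trans G.interiorVerts_subset),
          sub_add_cancel]
    _ = ∑ S, (X - 1 : ℤ[X]) ^ #S :=
        sum_fiberwise_of_maps_to
          (fun S _ => mem_filter.2 ⟨mem_univ _, SimpleGraph.isAdmissible_admissibleClosure⟩) _
    _ = X ^ Fintype.card V := by
        have h := Fintype.sum_pow_mul_eq_add_pow V (X - 1 : ℤ[X]) 1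
        rw [sub_add_cancel] at h
        simpa using h
end

section
/- Let X be a finite graph and Y ⊆ X. The map α sending a pair (J, K), where J ∈ A(Y,X) and K ⊆ Y ∩ J°, to the subset J − K of X, is a bijection between {(J,K) : J ∈ A(Y,X), K ⊆ Y ∩ J°} and the power set of X. Its inverse sends H ⊆ X to (H ⊔ C, C), where C is the union of those connected components of X − H that are contained in Y. -/
open Classical

variable {V : Type*} [Fintype V] [DecidableEq V]

/-- The interior `J°` of `J`: vertices of `J` all of whose neighbors lie in `J`. -/
noncomputable def interiorSet (G : SimpleGraph V) (J : Finset V) : Finset V :=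
  J.filter fun i => ∀ j, G.Adj i j → j ∈ J

/-- `J ∈ A(Y,X)`: no connected component of the induced graph on the complement of
`J` is contained in `Y`. -/
def memA (G : SimpleGraph V) (Y J : Finset V) : Prop :=
  ∀ C : (G.induce {v : V | v ∉ J}).ConnectedComponent, ¬ ∀ v ∈ C.supp, (↑v : V) ∈ Y

/-- The union `C` of all connected components of the complement of `H` that are
contained in `Y`. -/
noncomputable def compInY (G : SimpleGraph V) (Y H : Finset V) : Finset V :=
  Finset.univ.filter fun v =>
    ∃ h : v ∉ H,
      ∀ w ∈ ((G.induce {x : V | x ∉ H}).connectedComponentMk ⟨v, h⟩).supp,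
        (↑w : V) ∈ Y

/-!
Write `C(H)` for `compInY G Y H`. Since `C(H)` is a union of components of `X − H`, its
vertices have all their neighbours in `H ∪ C(H)`, and every component of `X − (H ∪ C(H))` is
a component of `X − H` not contained in `Y`; so `H ↦ (H ∪ C(H), C(H))` lands in the domain and
is a right inverse of `α`. Conversely, for admissible `(J, K)` we have `C(J − K) = K`: a
component of `X − (J − K)` meeting `K` stays in `K ⊆ Y` because `K ⊆ J°`, while one meeting
`X − J` contains a component of `X − J`, which leaves `Y` because `J ∈ A(Y, X)`. Hence `α` is
injective.
-/

open SimpleGraph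

lemma SimpleGraph.Reachable.exists_induce_of_adj_mem {W : Type*} {G : SimpleGraph W}
    {S T : Set W} {v w : S} (hr : (G.induce S).Reachable v w) (hv : (v : W) ∈ T)
    (hT : ∀ a b : S, (G.induce S).Adj a b → (a : W) ∈ T → (b : W) ∈ T) :
    ∃ hw : (w : W) ∈ T, (G.induce T).Reachable ⟨v, hv⟩ ⟨w, hw⟩ := by
  obtain ⟨p⟩ := hr
  induction p with
  | nil => exact ⟨hv, .rfl⟩
  | cons hab _ ih =>
    have hb := hT _ _ hab hv
    obtain ⟨hw, hr⟩ := ih hb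
    exact ⟨hw, (show (G.induce T).Adj ⟨_, hv⟩ ⟨_, hb⟩ from hab).reachable.trans hr⟩

lemma memA_iff {W : Type*} (G : SimpleGraph W) (Y : Finset W) {J : Finset W} :
    memA G Y J ↔ ∀ v : ↥{x : W | x ∉ J},
      ∃ w, (G.induce {x : W | x ∉ J}).Reachable v w ∧ (w : W) ∉ Y := by
  simp only [memA, ConnectedComponent.forall, ConnectedComponent.mem_supp_iff,
    ConnectedComponent.eq, not_forall, exists_prop, reachable_comm]

section

variable (G : SimpleGraph V) (Y : Finset V)

lemma mem_interiorSet {J : Finset V} {v : V} :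
    v ∈ interiorSet G J ↔ v ∈ J ∧ ∀ j, G.Adj v j → j ∈ J :=
  Finset.mem_filter

lemma interiorSet_subset (J : Finset V) : interiorSet G J ⊆ J :=
  Finset.filter_subset _ _

lemma mem_compInY {H : Finset V} {v : V} :
    v ∈ compInY G Y H ↔ ∃ hv : v ∉ H,
      ∀ w, (G.induce {x : V | x ∉ H}).Reachable ⟨v, hv⟩ w → (w : V) ∈ Y := by
  simp only [compInY, Finset.mem_filter, Finset.mem_univ, true_and,
    ConnectedComponent.mem_supp_iff, ConnectedComponent.eq, reachable_comm]

lemma compInY_subset (H : Finset V) : compInY G Y H ⊆ Y := fun v hv ↦ by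
  obtain ⟨hvH, hY⟩ := (mem_compInY G Y).1 hv
  exact hY ⟨v, hvH⟩ .rfl

lemma disjoint_compInY (H : Finset V) : Disjoint H (compInY G Y H) :=
  Finset.disjoint_right.2 fun _ hv ↦ ((mem_compInY G Y).1 hv).1

lemma mem_compInY_of_adj {H : Finset V} {v j : V} (hv : v ∈ compInY G Y H) (hadj : G.Adj v j)
    (hj : j ∉ H) : j ∈ compInY G Y H := by
  obtain ⟨hvH, hY⟩ := (mem_compInY G Y).1 hv
  have hvj : (G.induce {x | x ∉ H}).Reachable ⟨v, hvH⟩ ⟨j, hj⟩ := Adj.reachable hadj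
  exact (mem_compInY G Y).2 ⟨hj, fun w hw ↦ hY w (hvj.trans hw)⟩

lemma memA_union_compInY (H : Finset V) : memA G Y (H ∪ compInY G Y H) := by
  refine (memA_iff G Y).2 fun ⟨v, hv⟩ ↦ ?_
  simp only [Set.mem_ofPred_eq, Finset.mem_union, not_or] at hv
  obtain ⟨hvH, hvC⟩ := hv
  obtain ⟨w, hr, hwY⟩ :
      ∃ w, (G.induce {x | x ∉ H}).Reachable ⟨v, hvH⟩ w ∧ (w : V) ∉ Y := by
    simpa [mem_compInY, hvH] using hvC
  have houtside_closed : ∀ a b : ↥{x : V | x ∉ H}, (G.induce {x | x ∉ H}).Adj a b →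
      (a : V) ∉ H ∪ compInY G Y H → (b : V) ∉ H ∪ compInY G Y H := fun a b hab ha ↦ by
    simp only [Finset.mem_union, not_or] at ha ⊢
    exact ⟨b.2, fun hb ↦ ha.2 (mem_compInY_of_adj G Y hb (G.adj_symm hab) a.2)⟩
  obtain ⟨hw, hr'⟩ := hr.exists_induce_of_adj_mem (T := {x | x ∉ H ∪ compInY G Y H})
    (by simp [hvH, hvC]) houtside_closed
  exact ⟨⟨w, hw⟩, hr', hwY⟩

lemma compInY_subset_inter_interiorSet (H : Finset V) :
    compInY G Y H ⊆ Y ∩ interiorSet G (H ∪ compInY G Y H) := fun v hv ↦ by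
  refine Finset.mem_inter.2 ⟨compInY_subset G Y H hv, (mem_interiorSet G).2
    ⟨Finset.mem_union_right _ hv, fun j hadj ↦ ?_⟩⟩
  by_cases hj : j ∈ H
  · exact Finset.mem_union_left _ hj
  · exact Finset.mem_union_right _ (mem_compInY_of_adj G Y hv hadj hj)

lemma compInY_sdiff_subset {J : Finset V} (hJ : memA G Y J) (K : Finset V) :
    compInY G Y (J \ K) ⊆ K := fun v hv ↦ by
  by_contra hvK
  obtain ⟨hvH, hY⟩ := (mem_compInY G Y).1 hv
  have hvJ : v ∉ J := fun hvJ ↦ hvH (Finset.mem_sdiff.2 ⟨hvJ, hvK⟩)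
  obtain ⟨w, hr, hwY⟩ := (memA_iff G Y).1 hJ ⟨v, hvJ⟩
  have hJK : {x : V | x ∉ J} ⊆ {x | x ∉ J \ K} := fun _ hx hxJK ↦
    hx (Finset.mem_sdiff.1 hxJK).1
  exact hwY (hY _ (hr.map (G.induceHomOfLE hJK).toHom))

lemma subset_compInY_sdiff {J K : Finset V} (hK : K ⊆ Y ∩ interiorSet G J) :
    K ⊆ compInY G Y (J \ K) := fun v hv ↦ by
  have hvH : v ∉ J \ K := fun h ↦ (Finset.mem_sdiff.1 h).2 hv
  refine (mem_compInY G Y).2 ⟨hvH, fun w hr ↦ ?_⟩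
  have hKclosed : ∀ a b : ↥{x : V | x ∉ J \ K}, (G.induce {x | x ∉ J \ K}).Adj a b →
      (a : V) ∈ K → (b : V) ∈ K := fun a b hab ha ↦ by
    have hbJ : (b : V) ∈ J := ((mem_interiorSet G).1 (Finset.mem_inter.1 (hK ha)).2).2 _ hab
    by_contra hbK
    exact b.2 (Finset.mem_sdiff.2 ⟨hbJ, hbK⟩)
  obtain ⟨hwK, -⟩ := hr.exists_induce_of_adj_mem (T := ↑K) hv hKclosed
  exact (Finset.mem_inter.1 (hK hwK)).1

lemma compInY_sdiff_eq {J K : Finset V} (hJ : memA G Y J) (hK : K ⊆ Y ∩ interiorSet G J) :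
    compInY G Y (J \ K) = K :=
  (compInY_sdiff_subset G Y hJ K).antisymm (subset_compInY_sdiff G Y hK)

lemma injOn_sdiff :
    Set.InjOn (fun p : Finset V × Finset V ↦ p.1 \ p.2)
      {p | memA G Y p.1 ∧ p.2 ⊆ Y ∩ interiorSet G p.1} := by
  rintro ⟨J₁, K₁⟩ ⟨hJ₁, hK₁ : K₁ ⊆ Y ∩ interiorSet G J₁⟩ ⟨J₂, K₂⟩
    ⟨hJ₂, hK₂ : K₂ ⊆ Y ∩ interiorSet G J₂⟩ (h : J₁ \ K₁ = J₂ \ K₂)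
  have hK : K₁ = K₂ := by
    rw [← compInY_sdiff_eq G Y hJ₁ hK₁, h, compInY_sdiff_eq G Y hJ₂ hK₂]
  have hKJ : ∀ {J K : Finset V}, K ⊆ Y ∩ interiorSet G J → K ⊆ J := fun hK ↦
    hK.trans (Finset.inter_subset_right.trans (interiorSet_subset G _))
  refine Prod.ext ?_ hK
  rw [← Finset.sdiff_union_of_subset (hKJ hK₁), ← Finset.sdiff_union_of_subset (hKJ hK₂),
    h, hK]

end

/-- The map `(J, K) ↦ J − K`, for `J ∈ A(Y,X)` and `K ⊆ Y ∩ J°`, is a bijection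
onto the power set of `V`; its inverse sends `H` to `(H ⊔ C, C)` where `C` is the
union of the connected components of the complement of `H` contained in `Y`. -/
theorem stmt1 (G : SimpleGraph V) (Y : Finset V) :
    Set.BijOn (fun p : Finset V × Finset V => p.1 \ p.2)
      {p : Finset V × Finset V | memA G Y p.1 ∧ p.2 ⊆ Y ∩ interiorSet G p.1}
      Set.univ ∧
    ∀ H : Finset V,
      ((H ∪ compInY G Y H, compInY G Y H) ∈
        {p : Finset V × Finset V | memA G Y p.1 ∧ p.2 ⊆ Y ∩ interiorSet G p.1}) ∧
      Disjoint H (compInY G Y H) ∧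
      (H ∪ compInY G Y H) \ compInY G Y H = H := by
  have hmem : ∀ H, (H ∪ compInY G Y H, compInY G Y H) ∈
      {p : Finset V × Finset V | memA G Y p.1 ∧ p.2 ⊆ Y ∩ interiorSet G p.1} := fun H ↦
    ⟨memA_union_compInY G Y H, compInY_subset_inter_interiorSet G Y H⟩
  have hsdiff : ∀ H, (H ∪ compInY G Y H) \ compInY G Y H = H := fun H ↦
    Finset.union_sdiff_cancel_right (disjoint_compInY G Y H)
  exact ⟨⟨fun _ _ ↦ Set.mem_univ _, injOn_sdiff G Y, fun H _ ↦ ⟨_, hmem H, hsdiff H⟩⟩,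
    fun H ↦ ⟨hmem H, disjoint_compInY G Y H, hsdiff H⟩⟩
end

section
/- Let Φ be a simply-laced irreducible root system with simple roots {α_k}_{k ∈ 𝕊}, fundamental coweights {ω_k^∨}, and let μ be a dominant coweight. Suppose i, j ∈ 𝕊 (possibly equal) are such that μ − ω_i^∨ − ω_j^∨ is dominant, and let X ⊆ 𝕊 be the vertex set of the unique path in the Dynkin diagram from i to j. Then λ = μ − ∑_{k ∈ X} α_k^∨ is again a dominant coweight. -/
/-- Combinatorial form of the dominance of `λ = μ − ∑_{k ∈ X} α_k^∨` in a
simply-laced root system. The Dynkin diagram data is encoded by the (symmetric)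
Cartan pairings `c k l = ⟨α_k^∨, α_l⟩ ∈ {2, −1, 0}`, a coweight by its pairings
`μ l = ⟨μ, α_l⟩`; `μ − ω_i^∨ − ω_j^∨` dominant means `μ l ≥ δ_{l i} + δ_{l j}`.
`X` is the (induced) path in the Dynkin diagram from `i` to `j`: consecutive
vertices are adjacent and non-consecutive ones are not. The conclusion is that
`λ` is dominant: `⟨μ, α_l⟩ − ∑_{k ∈ X} c k l ≥ 0` for all `l`. -/
theorem stmt12 {S : Type*} [Fintype S] [DecidableEq S]
    (c : S → S → ℤ)
    (hdiag : ∀ k, c k k = 2)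
    (hsymm : ∀ k l, c k l = c l k)
    (hoff : ∀ k l, k ≠ l → c k l = 0 ∨ c k l = -1)
    (μ : S → ℤ) (i j : S)
    (hdom : ∀ l, (if l = i then 1 else 0) + (if l = j then 1 else 0) ≤ μ l)
    (X : List S) (hX : X.Nodup)
    (hhead : X.head? = some i) (hlast : X.getLast? = some j)
    (hchain : X.Chain' fun k l => c k l = -1)
    (hinduced : ∀ p q : Fin X.length, (p : ℕ) + 1 < (q : ℕ) →
      c (X.get p) (X.get q) = 0) :
    ∀ l, 0 ≤ μ l - ∑ k ∈ X.toFinset, c k l := by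
  intro l
  have hμ0 : 0 ≤ μ l := le_trans (by split_ifs <;> norm_num) (hdom l)
  have hinj : Function.Injective X.get := List.nodup_iff_injective_get.mp hX
  have himg : X.toFinset = Finset.image (fun p : Fin X.length => X.get p) Finset.univ := by
    ext k
    simp [List.mem_iff_get, eq_comm]
  rw [himg, Finset.sum_image (fun a _ b _ h => hinj h)]
  set f : Fin X.length → ℤ := fun p => c (X.get p) l with hf
  by_cases hl : l ∈ X
  · obtain ⟨p0, hp0⟩ := List.mem_iff_get.mp hl
    have hne : ∀ q : Fin X.length, q ≠ p0 → f q ≤ 0 := by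
      intro q hq
      have hq' : X.get q ≠ l := fun h => hq (hinj (h.trans hp0.symm))
      have hfq : f q = c (X.get q) l := rfl
      rcases hoff (X.get q) l hq' with h | h <;> rw [hfq, h] <;> norm_num
    have hfp0 : f p0 = 2 := by
      have : f p0 = c (X.get p0) l := rfl
      rw [this, hp0, hdiag]
    have key : ∀ T : Finset (Fin X.length), p0 ∈ T → ∑ p, f p ≤ ∑ p ∈ T, f p := by
      intro T hpT
      have h2 := Finset.sum_le_sum_of_subset_of_nonneg (f := fun q => -f q)
        (Finset.subset_univ T)
        (fun q _ hq => neg_nonneg.mpr (hne q (fun h => hq (h ▸ hpT))))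
      simp only [Finset.sum_neg_distrib, neg_le_neg_iff] at h2
      exact h2
    have hch := List.isChain_iff_getElem.mp hchain
    have hn : 0 < X.length := p0.isLt.trans_le' (Nat.zero_le _) |>.trans_le (le_refl _)
    by_cases h0 : (p0 : ℕ) = 0 <;> by_cases hL : (p0 : ℕ) = X.length - 1
    · -- singleton endpoint: l = i and l = j
      have hli : l = i := by
        rw [List.head?_eq_getElem?, List.getElem?_eq_getElem (h0 ▸ p0.isLt)] at hhead
        have h' : X[(0:ℕ)] = i := Option.some_injective _ hhead
        rw [← hp0, List.get_eq_getElem]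
        simp only [h0]
        exact h'
      have hlj : l = j := by
        rw [List.getLast?_eq_getElem?, List.getElem?_eq_getElem (hL ▸ p0.isLt)] at hlast
        have h' : X[X.length - 1] = j := Option.some_injective _ hlast
        rw [← hp0, List.get_eq_getElem]
        simp only [hL]
        exact h'
      have hμ := hdom l
      rw [if_pos hli, if_pos hlj] at hμ
      have hsum := key {p0} (Finset.mem_singleton_self p0)
      rw [Finset.sum_singleton, hfp0] at hsum
      linarith
    · -- p0 = 0, not last: l = i, right neighbor
      have hli : l = i := by
        rw [List.head?_eq_getElem?, List.getElem?_eq_getElem (h0 ▸ p0.isLt)] at hhead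
        have h' : X[(0:ℕ)] = i := Option.some_injective _ hhead
        rw [← hp0, List.get_eq_getElem]
        simp only [h0]
        exact h'
      have hlt : (p0 : ℕ) + 1 < X.length := by have := p0.isLt; omega
      set q2 : Fin X.length := ⟨(p0 : ℕ) + 1, hlt⟩ with hq2
      have hfq2 : f q2 = -1 := by
        have hc := hch (p0 : ℕ) (by omega)
        show c (X.get q2) l = -1
        rw [hsymm, ← hp0]
        exact hc
      have hd : p0 ≠ q2 := by
        intro h; have := congrArg Fin.val h; simp only [hq2, Fin.val_mk] at this; omega
      have hsum := key {p0, q2} (Finset.mem_insert_self _ _)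
      rw [Finset.sum_pair hd, hfp0, hfq2] at hsum
      have hμ := hdom l
      rw [if_pos hli] at hμ
      have hj0 : (0:ℤ) ≤ if l = j then 1 else 0 := by split_ifs <;> norm_num
      linarith
    · -- p0 last, not 0: l = j, left neighbor
      have hlj : l = j := by
        rw [List.getLast?_eq_getElem?, List.getElem?_eq_getElem (hL ▸ p0.isLt)] at hlast
        have h' : X[X.length - 1] = j := Option.some_injective _ hlast
        rw [← hp0, List.get_eq_getElem]
        simp only [hL]
        exact h'
      have hlt : (p0 : ℕ) - 1 < X.length := by have := p0.isLt; omega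
      set q1 : Fin X.length := ⟨(p0 : ℕ) - 1, hlt⟩ with hq1
      have hfq1 : f q1 = -1 := by
        have hc := hch ((p0 : ℕ) - 1) (by have := p0.isLt; omega)
        have hE : (p0:ℕ) - 1 + 1 = p0 := by omega
        simp only [hE] at hc
        show c (X.get q1) l = -1
        rw [← hp0]
        exact hc
      have hd : p0 ≠ q1 := by
        intro h; have := congrArg Fin.val h; simp only [hq1, Fin.val_mk] at this; omega
      have hsum := key {p0, q1} (Finset.mem_insert_self _ _)
      rw [Finset.sum_pair hd, hfp0, hfq1] at hsum
      have hμ := hdom l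
      rw [if_pos hlj] at hμ
      have hi0 : (0:ℤ) ≤ if l = i then 1 else 0 := by split_ifs <;> norm_num
      linarith
    · -- interior
      have hlt2 : (p0 : ℕ) + 1 < X.length := by have := p0.isLt; omega
      have hlt1 : (p0 : ℕ) - 1 < X.length := by have := p0.isLt; omega
      set q1 : Fin X.length := ⟨(p0 : ℕ) - 1, hlt1⟩ with hq1
      set q2 : Fin X.length := ⟨(p0 : ℕ) + 1, hlt2⟩ with hq2
      have hfq2 : f q2 = -1 := by
        have hc := hch (p0 : ℕ) (by omega)
        show c (X.get q2) l = -1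
        rw [hsymm, ← hp0]
        exact hc
      have hfq1 : f q1 = -1 := by
        have hc := hch ((p0 : ℕ) - 1) (by have := p0.isLt; omega)
        have hE : (p0:ℕ) - 1 + 1 = p0 := by omega
        simp only [hE] at hc
        show c (X.get q1) l = -1
        rw [← hp0]
        exact hc
      have hd12 : q1 ≠ q2 := by
        intro h; have := congrArg Fin.val h; simp only [hq1, hq2, Fin.val_mk] at this; omega
      have hd01 : p0 ≠ q1 := by
        intro h; have := congrArg Fin.val h; simp only [hq1, Fin.val_mk] at this; omega
      have hd02 : p0 ≠ q2 := by
        intro h; have := congrArg Fin.val h; simp only [hq2, Fin.val_mk] at this; omega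
      have hT := key {p0, q1, q2} (Finset.mem_insert_self _ _)
      rw [Finset.sum_insert (by simp [hd01, hd02]), Finset.sum_pair hd12,
        hfp0, hfq1, hfq2] at hT
      linarith
  · have hle : ∑ p, f p ≤ 0 := Finset.sum_nonpos fun p _ => by
      have hne : X.get p ≠ l := fun h => hl (h ▸ X.get_mem p)
      have hfp : f p = c (X.get p) l := rfl
      rcases hoff (X.get p) l hne with h | h <;> rw [hfp, h] <;> norm_num
    linarith
end

section
/- Let Φ be a root system with simple roots indexed by 𝕊, fundamental weights ω_i, and let σ be a diagram automorphism with orbits 𝒪 on 𝕊; set ω_𝒪 = ∑_{i∈𝒪} ω_i. Let μ be a dominant coweight and define B(Φ,σ,μ) as the set of σ-invariant dominant vectors ν in the coweight space such that ⟨μ^⋄ − ν, ω_{𝒪_i}⟩ ∈ ℤ_{≥0} for every i ∈ 𝕊 with ⟨ν, α_i⟩ ≠ 0, where μ^⋄ is the average of the σ-orbit of μ. Then μ^⋄ ∈ B(Φ,σ,μ), and B(Φ,σ,μ) is a finite set. -/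
/-!
`μ^⋄` lies in `B` at once. For finiteness, an element `x ∈ B` is determined by its support
together with the values `⟨x, ω_{𝒪_i}⟩` on the support, and these values range over the finitely
many numbers `⟨μ^⋄, ω_{𝒪_i}⟩ - z ≥ 0` with `z ∈ ℕ`. Indeed, if `x, y ∈ B` share these data, then
`w = x - y` is σ-invariant, so `q_j = ⟨w, ω_j⟩` is constant on σ-orbits; its orbit sums vanish
at the support of `x`, hence so does `q`, and thus `⟨w, D w⟩ = ∑ q_j w_j = 0`, and positive definiteness gives `w = 0`.
-/

namespace Equiv.Perm

variable {α β : Type*} {σ : Perm α} {f : α → β}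

theorem SameCycle.apply_eq_of_invariant (hf : ∀ a, f (σ a) = f a) {a b : α}
    (h : σ.SameCycle a b) : f b = f a := by
  obtain ⟨n, rfl⟩ := h
  induction n using Int.induction_on generalizing a with
  | zero => rfl
  | succ n ih => rw [zpow_add_one, mul_apply, ih, hf]
  | pred n ih => rw [zpow_sub_one, mul_apply, ih, ← hf, inv_def, apply_symm_apply]

end Equiv.Perm

section
open Matrix
variable {S R : Type*} [Fintype S]

theorem vecMul_perm_apply_of_invariant [NonUnitalNonAssocSemiring R] {σ : Equiv.Perm S}
    {D : Matrix S S R} (hD : ∀ i j, D (σ i) (σ j) = D i j) {w : S → R}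
    (hw : ∀ k, w (σ k) = w k) (j : S) : (w ᵥ* D) (σ j) = (w ᵥ* D) j := by
  have hDsub : D.submatrix σ σ = D := Matrix.ext hD
  have hwsymm : w ∘ σ.symm = w := funext fun k => by simpa using (hw (σ.symm k)).symm
  conv_rhs => rw [← hDsub, submatrix_vecMul_equiv, hwsymm]
  rfl

theorem eq_zero_of_vecMul_mul_self_eq_zero [Semiring R] [Preorder R] {D : Matrix S S R}
    (hD : ∀ w : S → R, w ≠ 0 → 0 < ∑ i, ∑ j, w i * D i j * w j) {w : S → R}
    (hw : ∀ j, (w ᵥ* D) j * w j = 0) : w = 0 := by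
  by_contra hne
  have hform : ∑ i, ∑ j, w i * D i j * w j = ∑ j, (w ᵥ* D) j * w j := by
    rw [Finset.sum_comm]
    simp only [vecMul, dotProduct, Finset.sum_mul]
  simpa [hform, hw] using hD w hne

theorem eq_of_sum_vecMul_eq_on_orbits [Field R] [LinearOrder R] [IsStrictOrderedRing R]
    {σ : Equiv.Perm S} {D : Matrix S S R}
    (hDσ : ∀ i j, D (σ i) (σ j) = D i j)
    (hD : ∀ w : S → R, w ≠ 0 → 0 < ∑ i, ∑ j, w i * D i j * w j)
    (orb : S → Finset S) (hmem : ∀ i, i ∈ orb i) (hsc : ∀ i, ∀ j ∈ orb i, σ.SameCycle i j)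
    {x y : S → R} (hx : ∀ i, x (σ i) = x i) (hy : ∀ i, y (σ i) = y i)
    (hzero : ∀ i, x i = 0 → y i = 0)
    (hpair : ∀ i, x i ≠ 0 → ∑ j ∈ orb i, (x ᵥ* D) j = ∑ j ∈ orb i, (y ᵥ* D) j) :
    x = y := by
  set w := x - y
  have hw : ∀ k, w (σ k) = w k := fun k => by simp [w, hx, hy]
  have hconst : ∀ i, ∀ j ∈ orb i, (w ᵥ* D) j = (w ᵥ* D) i := fun i j hj =>
    (hsc i j hj).apply_eq_of_invariant (vecMul_perm_apply_of_invariant hDσ hw)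
  have hvanish : ∀ i, x i ≠ 0 → (w ᵥ* D) i = 0 := by
    intro i hi
    have hsum : ∑ j ∈ orb i, (w ᵥ* D) j = 0 := by
      simp [w, sub_vecMul, Finset.sum_sub_distrib, hpair i hi]
    rw [Finset.sum_eq_card_nsmul (hconst i)] at hsum
    exact (smul_eq_zero.1 hsum).resolve_left (Finset.card_ne_zero_of_mem (hmem i))
  refine sub_eq_zero.1 (eq_zero_of_vecMul_mul_self_eq_zero hD fun j => ?_)
  by_cases hxj : x j = 0
  · simp [hxj, hzero j hxj]
  · rw [hvanish j hxj, zero_mul]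

end

theorem finite_setOf_nonneg_sub_eq_natCast {R : Type*} [Field R] [LinearOrder R]
    [IsStrictOrderedRing R] [Archimedean R] (c : R) :
    {q : R | 0 ≤ q ∧ ∃ z : ℕ, c - q = z}.Finite := by
  obtain ⟨N, hN⟩ := exists_nat_gt c
  refine ((Set.finite_Iio N).image fun z : ℕ => c - z).subset ?_
  rintro q ⟨hq, z, hz⟩
  refine ⟨z, ?_, by simp only [← hz, sub_sub_cancel]⟩
  exact_mod_cast (show (z : R) < N by linarith)

theorem Set.Finite.of_determined_by_support_and_values {ι α β : Type*} [Finite ι] [Zero α]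
    {B : Set (ι → α)} (P : (ι → α) → ι → β)
    (hfin : ∀ i, {b | ∃ x ∈ B, x i ≠ 0 ∧ P x i = b}.Finite)
    (hdet : ∀ x ∈ B, ∀ y ∈ B, (∀ i, x i = 0 ↔ y i = 0) → (∀ i, x i ≠ 0 → P x i = P y i) →
      x = y) :
    B.Finite := by
  classical
  let code : (ι → α) → ι → Option β := fun x i => if x i = 0 then none else some (P x i)
  have himage : (code '' B).Finite := by
    refine (Set.Finite.pi fun i => ((hfin i).image some).insert none).subset ?_
    rintro _ ⟨x, hx, rfl⟩ i -
    by_cases hxi : x i = 0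
    · simp [code, hxi]
    · exact Or.inr ⟨P x i, ⟨x, hx, hxi, rfl⟩, by simp [code, hxi]⟩
  refine himage.of_finite_image fun x hx y hy hxy => hdet x hx y hy (fun i => ?_) (fun i hi => ?_)
  · have := congrFun hxy i
    by_cases hxi : x i = 0 <;> by_cases hyi : y i = 0 <;> simp_all [code]
  · have := congrFun hxy i
    by_cases hyi : y i = 0 <;> simp_all [code]

open Classical in
/-- Vectors of the coweight space are written in coordinates with respect to the
fundamental coweights: `⟨x, α_i⟩ = x i` and `⟨x, ω_j⟩ = ∑ k, x k * D k j` with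
`D i j = ⟨ω_i^∨, ω_j⟩`. The dominant coweight `μ` is given by `m i = ⟨μ, α_i⟩`, so
`μ^⋄` has coordinates `d`, the orbit averages of `m`. -/
theorem stmt14 {S : Type*} [Fintype S] [DecidableEq S]
    (σ : Equiv.Perm S) (D : S → S → ℚ)
    (hDσ : ∀ i j, D (σ i) (σ j) = D i j)
    (hDnonneg : ∀ i j, 0 ≤ D i j)
    (hDposdef : ∀ x : S → ℚ, x ≠ 0 → 0 < ∑ i, ∑ j, x i * D i j * x j)
    (m : S → ℤ) (hm : ∀ i, 0 ≤ m i) :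
    let orb : S → Finset S := fun i => Finset.univ.filter fun j => σ.SameCycle i j
    let d : S → ℚ := fun i => (∑ j ∈ orb i, (m j : ℚ)) / (orb i).card
    let pairOmega : (S → ℚ) → S → ℚ := fun x i => ∑ j ∈ orb i, ∑ k, x k * D k j
    let B : Set (S → ℚ) := {x | (∀ i, x (σ i) = x i) ∧ (∀ i, 0 ≤ x i) ∧
      ∀ i, x i ≠ 0 → ∃ z : ℕ, pairOmega d i - pairOmega x i = (z : ℚ)}
    d ∈ B ∧ B.Finite := by
  intro orb d pairOmega B
  have horb : ∀ i j, j ∈ orb i ↔ σ.SameCycle i j := by simp [orb]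
  have hpair_nonneg : ∀ x : S → ℚ, (∀ i, 0 ≤ x i) → ∀ i, 0 ≤ pairOmega x i := fun x hx i =>
    Finset.sum_nonneg fun j _ => Finset.sum_nonneg fun k _ => mul_nonneg (hx k) (hDnonneg k j)
  have hd : d ∈ B := by
    refine ⟨fun i => ?_, fun i => ?_, fun i _ => ⟨0, by simp⟩⟩
    · have : orb (σ i) = orb i := Finset.ext fun j => by simp only [horb, σ.sameCycle_apply_left]
      simp only [d, this]
    · exact div_nonneg (Finset.sum_nonneg fun j _ => by exact_mod_cast hm j) (Nat.cast_nonneg _)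
  refine ⟨hd, Set.Finite.of_determined_by_support_and_values pairOmega (fun i => ?_) ?_⟩
  · refine (finite_setOf_nonneg_sub_eq_natCast (pairOmega d i)).subset ?_
    rintro _ ⟨x, hx, hxi, rfl⟩
    exact ⟨hpair_nonneg x hx.2.1 i, hx.2.2 i hxi⟩
  · intro x hx y hy hzero hpair
    exact eq_of_sum_vecMul_eq_on_orbits hDσ hDposdef orb (fun i => (horb i i).2 .rfl)
      (fun i j => (horb i j).1) hx.1 hy.1 (fun i => (hzero i).1) hpair
end

section
/- Let Φ be a root system with Weyl group W, simple reflections indexed by 𝕊, and let σ be a diagram automorphism. Let μ be a dominant coweight that is 'essentially non-central', i.e., for every σ-orbit of connected components of the Dynkin diagram, μ is noncentral on it. Define e_i ∈ ℚω_i^∨ by ⟨e_i, ω_i⟩ = (1/#𝒪_i)·max{0, ⟨μ, ω_{𝒪_i}⟩ − 1} for each i ∈ 𝕊, where 𝒪_i is the σ-orbit of i and ω_{𝒪_i} = ∑_{j∈𝒪_i} ω_j. Then the set C_{≥E} = {v σ-invariant dominant : v ≥ e_i for all i} (with ≥ the dominance order) has a unique minimal element. -/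
section Aux
variable {S : Type*} [Fintype S] [DecidableEq S]

theorem aux_min_dom {K : Type*} [Field K] [LinearOrder K] [IsStrictOrderedRing K] (C : S → S → K)
    (hCoff : ∀ i j, i ≠ j → C i j ≤ 0) (y z : S → K)
    (hy : ∀ k, 0 ≤ ∑ j, y j * C j k) (hz : ∀ k, 0 ≤ ∑ j, z j * C j k) :
    ∀ k, 0 ≤ ∑ j, min (y j) (z j) * C j k := by
  intro k
  rcases le_total (y k) (z k) with h | h
  · refine le_trans (hy k) (Finset.sum_le_sum fun j _ => ?_)
    rcases eq_or_ne j k with rfl | hjk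
    · rw [min_eq_left h]
    · exact mul_le_mul_of_nonpos_right (min_le_left _ _) (hCoff j k hjk)
  · refine le_trans (hz k) (Finset.sum_le_sum fun j _ => ?_)
    rcases eq_or_ne j k with rfl | hjk
    · rw [min_eq_right h]
    · exact mul_le_mul_of_nonpos_right (min_le_right _ _) (hCoff j k hjk)

theorem aux_W (C : S → S → ℚ)
    (hCoff : ∀ i j, i ≠ j → C i j ≤ 0)
    (ds : S → ℚ) (hds : ∀ i, 0 < ds i)
    (hCsymm : ∀ i j, ds i * C i j = ds j * C j i)
    (hCposdef : ∀ x : S → ℚ, x ≠ 0 → 0 < ∑ i, ∑ j, ds i * C i j * x i * x j)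
    (W : S → S → ℚ) (hW : ∀ i k, (∑ j, W i j * C j k) = if i = k then 1 else 0) :
    (∀ i j, 0 ≤ W i j) ∧ (∀ j, 0 < W j j) ∧
      (∀ x : S → ℚ, (∀ k, ∑ j, x j * C j k = 0) → x = 0) := by
  set Q2 : (S → ℚ) → (S → ℚ) → ℚ :=
    fun x y => ∑ j, ∑ k, x j * C j k * (y k / ds k) with hQ2
  have hQpos : ∀ x, x ≠ 0 → 0 < Q2 x x := by
    intro x hx
    have hu : (fun j => x j / ds j) ≠ 0 := by
      intro h
      apply hx
      funext j
      have h1 := congrFun h j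
      simp only [Pi.zero_apply, div_eq_zero_iff] at h1
      rcases h1 with h1 | h1
      · exact h1
      · exact absurd h1 (hds j).ne'
    have hpos := hCposdef _ hu
    have heq : Q2 x x = ∑ i, ∑ j, ds i * C i j * (x i / ds i) * (x j / ds j) := by
      refine Finset.sum_congr rfl fun j _ => Finset.sum_congr rfl fun k _ => ?_
      have h1 := (hds j).ne'
      have h2 := (hds k).ne'
      field_simp
    rw [heq]; exact hpos
  have hQ_w : ∀ i (y : S → ℚ), Q2 (W i) y = y i / ds i := by
    intro i y
    have h1 : Q2 (W i) y = ∑ k, (∑ j, W i j * C j k) * (y k / ds k) := by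
      simp only [hQ2]
      rw [Finset.sum_comm]
      refine Finset.sum_congr rfl fun k _ => ?_
      rw [Finset.sum_mul]
    rw [h1]
    simp [hW, ite_mul]
  have hQsym : ∀ x y, Q2 x y = Q2 y x := by
    intro x y
    simp only [hQ2]
    rw [Finset.sum_comm]
    refine Finset.sum_congr rfl fun a _ => Finset.sum_congr rfl fun b _ => ?_
    have h1 := (hds a).ne'
    have h2 := (hds b).ne'
    field_simp
    linear_combination (x b * y a) * hCsymm b a
  have hQadd : ∀ x y z, Q2 x (fun j => y j + z j) = Q2 x y + Q2 x z := by
    intro x y z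
    rw [hQ2, ← Finset.sum_add_distrib]
    refine Finset.sum_congr rfl fun j _ => ?_
    rw [← Finset.sum_add_distrib]
    refine Finset.sum_congr rfl fun k _ => ?_
    ring
  have hWnn : ∀ i j, 0 ≤ W i j := by
    intro i
    by_contra hcon
    push_neg at hcon
    obtain ⟨j0, hj0⟩ := hcon
    set w : S → ℚ := W i with hw
    set n : S → ℚ := fun j => max 0 (-(w j)) with hn
    have hnne : n ≠ 0 := by
      intro h
      have h1 := congrFun h j0
      simp only [hn, Pi.zero_apply] at h1
      have : (0:ℚ) < -(w j0) := by linarith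
      rw [max_eq_right this.le] at h1
      linarith
    have hn0 : ∀ j, 0 ≤ n j := fun j => le_max_left _ _
    have hp0 : ∀ j, 0 ≤ w j + n j := by
      intro j
      rcases le_total (w j) 0 with h | h
      · have : n j = -(w j) := max_eq_right (by linarith)
        rw [this]; linarith
      · have : n j = 0 := max_eq_left (by linarith)
        rw [this]; linarith
    have hnp : ∀ j, n j * (w j + n j) = 0 := by
      intro j
      rcases le_total (w j) 0 with h | h
      · have : n j = -(w j) := max_eq_right (by linarith)
        rw [this]; ring
      · have : n j = 0 := max_eq_left (by linarith)
        rw [this]; ring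
    have key1 : Q2 n w = n i / ds i := by rw [hQsym]; exact hQ_w i n
    have key2 : Q2 n (fun j => w j + n j) ≤ 0 := by
      apply Finset.sum_nonpos
      intro j _
      apply Finset.sum_nonpos
      intro k _
      rcases eq_or_ne j k with rfl | hjk
      · show n j * C j j * ((w j + n j) / ds j) ≤ 0
        have h1 : n j * C j j * ((w j + n j) / ds j)
            = C j j / ds j * (n j * (w j + n j)) := by ring
        rw [h1, hnp j, mul_zero]
      · show n j * C j k * ((w k + n k) / ds k) ≤ 0
        have h1 : 0 ≤ (w k + n k) / ds k := div_nonneg (hp0 k) (hds k).le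
        have h2 := hCoff j k hjk
        have h3 := hn0 j
        have h4 : n j * C j k ≤ 0 := mul_nonpos_iff.mpr (Or.inl ⟨h3, h2⟩)
        exact mul_nonpos_iff.mpr (Or.inr ⟨h4, h1⟩)
    have hfin : Q2 n n ≤ 0 := by
      have h4 := hQadd n w n
      have h5 : 0 ≤ Q2 n w := key1 ▸ div_nonneg (hn0 i) (hds i).le
      linarith
    exact absurd hfin (not_le.mpr (hQpos n hnne))
  refine ⟨hWnn, ?_, ?_⟩
  · intro j
    have hne : W j ≠ 0 := by
      intro h
      have h1 := hW j j
      simp only [h, Pi.zero_apply, zero_mul, Finset.sum_const_zero, if_pos rfl] at h1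
      norm_num at h1
    have h2 := hQpos (W j) hne
    rw [hQ_w j (W j)] at h2
    have h3 := mul_pos h2 (hds j)
    rwa [div_mul_cancel₀ _ (hds j).ne'] at h3
  · intro x hx
    by_contra h
    have h2 := hQpos x h
    have h3 : Q2 x x = 0 := by
      have h1 : Q2 x x = ∑ k, (∑ j, x j * C j k) * (x k / ds k) := by
        simp only [hQ2]
        rw [Finset.sum_comm]
        refine Finset.sum_congr rfl fun k _ => ?_
        rw [Finset.sum_mul]
      rw [h1]
      simp [hx]
    rw [h3] at h2
    exact lt_irrefl _ h2

end Aux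

theorem aux_real {S : Type*} [Fintype S] [DecidableEq S]
    (Cr : S → S → ℝ) (hCoff : ∀ i j, i ≠ j → Cr i j ≤ 0)
    (Lr : S → ℝ) (y1 : S → ℝ)
    (hy1 : (∀ k, 0 ≤ ∑ j, y1 j * Cr j k) ∧ ∀ j, Lr j ≤ y1 j) :
    ∃ z : S → ℝ, ((∀ k, 0 ≤ ∑ j, z j * Cr j k) ∧ ∀ j, Lr j ≤ z j) ∧
      ∀ y : S → ℝ, ((∀ k, 0 ≤ ∑ j, y j * Cr j k) ∧ ∀ j, Lr j ≤ y j) →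
        ∀ j, z j ≤ y j := by
  classical
  set Cset : Set (S → ℝ) :=
    {y | (∀ k, 0 ≤ ∑ j, y j * Cr j k) ∧ ∀ j, Lr j ≤ y j} with hCset
  have hclosed : IsClosed Cset := by
    have h1 : Cset = (⋂ k, {y : S → ℝ | 0 ≤ ∑ j, y j * Cr j k}) ∩
        ⋂ j, {y : S → ℝ | Lr j ≤ y j} := by
      ext y
      simp [hCset, Set.mem_iInter, Set.mem_setOf_eq]
    rw [h1]
    refine IsClosed.inter (isClosed_iInter fun k => ?_) (isClosed_iInter fun j => ?_)
    · exact isClosed_le continuous_const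
        (continuous_finset_sum _ fun j _ => (continuous_apply j).mul continuous_const)
    · exact isClosed_le continuous_const (continuous_apply j)
  have hKsub : Cset ∩ Set.Icc Lr y1 ⊆ Set.Icc Lr y1 := Set.inter_subset_right
  have hKcomp : IsCompact (Cset ∩ Set.Icc Lr y1) := by
    have hIcc : IsCompact (Set.Icc Lr y1) := by
      rw [← Set.pi_univ_Icc]
      exact isCompact_univ_pi fun i => isCompact_Icc
    exact hIcc.of_isClosed_subset (hclosed.inter isClosed_Icc) hKsub
  have hKne : (Cset ∩ Set.Icc Lr y1).Nonempty :=
    ⟨y1, hy1, Set.mem_Icc.mpr ⟨fun j => hy1.2 j, le_refl _⟩⟩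
  obtain ⟨z, hzK, hzmin⟩ := hKcomp.exists_isMinOn hKne
    ((continuous_finset_sum Finset.univ fun j _ => continuous_apply j).continuousOn
      (s := Cset ∩ Set.Icc Lr y1) (f := fun y : S → ℝ => ∑ j, y j))
  refine ⟨z, hzK.1, ?_⟩
  intro y hy
  set w : S → ℝ := fun j => min (z j) (y j) with hwdef
  have hwC : w ∈ Cset :=
    ⟨aux_min_dom Cr hCoff z y hzK.1.1 hy.1, fun j => le_min (hzK.1.2 j) (hy.2 j)⟩
  have hwK : w ∈ Cset ∩ Set.Icc Lr y1 := by
    refine ⟨hwC, Set.mem_Icc.mpr ⟨fun j => hwC.2 j, ?_⟩⟩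
    intro j
    exact le_trans (min_le_left _ _) ((Set.mem_Icc.mp hzK.2).2 j)
  have hfz : ∑ j, z j ≤ ∑ j, w j := hzmin hwK
  have hsum0 : ∑ j, (z j - w j) = 0 := by
    rw [Finset.sum_sub_distrib]
    have h1 : ∀ j, w j ≤ z j := fun j => min_le_left _ _
    have h2 : ∑ j, w j ≤ ∑ j, z j := Finset.sum_le_sum fun j _ => h1 j
    linarith
  intro j
  have hall := (Finset.sum_eq_zero_iff_of_nonneg
    (fun j _ => by simp only [sub_nonneg]; exact min_le_left (z j) (y j))).mp hsum0 j
    (Finset.mem_univ j)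
  have : z j = w j := by
    have := hall
    linarith [sub_eq_zero.mp this]
  rw [this]
  exact min_le_right _ _
theorem aux_cast_mulVec {m n : Type*} [Fintype n] (M : Matrix m n ℚ) (v : n → ℚ) :
    (fun i => ((M.mulVec v i : ℚ) : ℝ)) = (M.map (fun a : ℚ => (a : ℝ))).mulVec
      (fun j => ((v j : ℚ) : ℝ)) := by
  funext i
  simp [Matrix.mulVec, dotProduct, Matrix.map_apply]

open Matrix in
theorem aux_rat {S : Type*} [Fintype S] [DecidableEq S]
    (C : S → S → ℚ) (L : S → ℚ)
    (hCoff : ∀ i j, i ≠ j → C i j ≤ 0) (y1 : S → ℚ)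
    (hy1 : (∀ k, 0 ≤ ∑ j, y1 j * C j k) ∧ ∀ j, L j ≤ y1 j) :
    ∃ q : S → ℚ, ((∀ k, 0 ≤ ∑ j, q j * C j k) ∧ ∀ j, L j ≤ q j) ∧
      ∀ y : S → ℚ, ((∀ k, 0 ≤ ∑ j, y j * C j k) ∧ ∀ j, L j ≤ y j) →
        ∀ j, q j ≤ y j := by
  classical
  have hCoffr : ∀ i j, i ≠ j → ((C i j : ℚ) : ℝ) ≤ 0 := fun i j h => by
    exact_mod_cast hCoff i j h
  have hdomcast : ∀ (y : S → ℚ) k,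
      (((∑ j, y j * C j k : ℚ) : ℝ)) = ∑ j, (y j : ℝ) * (C j k : ℝ) := by
    intro y k
    push_cast
    rfl
  obtain ⟨z, hzC, hzmin⟩ := aux_real (fun i j => ((C i j : ℚ) : ℝ)) hCoffr
    (fun j => ((L j : ℚ) : ℝ)) (fun j => (y1 j : ℝ)) (by
    constructor
    · intro k
      rw [← hdomcast]
      exact_mod_cast hy1.1 k
    · intro j
      show ((L j : ℚ) : ℝ) ≤ ((y1 j : ℚ) : ℝ)
      exact_mod_cast hy1.2 j)
  -- tight sets
  set P1 : S → Prop := fun k => (∑ j, z j * (C j k : ℝ)) = 0 with hP1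
  set P2 : S → Prop := fun j => z j = ((L j : ℚ) : ℝ) with hP2
  -- the matrix of tight constraints
  set A : Matrix (S ⊕ S) S ℚ := Matrix.of (Sum.elim
      (fun k j => if P1 k then C j k else 0)
      (fun i j => if P2 i ∧ i = j then 1 else 0)) with hA
  set b : S ⊕ S → ℚ := Sum.elim (fun _ => 0) (fun i => if P2 i then L i else 0) with hb
  set Ar : Matrix (S ⊕ S) S ℝ := A.map (fun a : ℚ => (a : ℝ)) with hAr
  have hArl : ∀ k j, Ar (Sum.inl k) j = if P1 k then ((C j k : ℚ) : ℝ) else 0 := by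
    intro k j
    simp [hAr, hA, Matrix.map_apply, apply_ite (fun a : ℚ => (a : ℝ))]
  have hArr : ∀ i j, Ar (Sum.inr i) j = if P2 i ∧ i = j then (1:ℝ) else 0 := by
    intro i j
    simp [hAr, hA, Matrix.map_apply, apply_ite (fun a : ℚ => (a : ℝ))]
  have hArz : Ar.mulVec z = fun r => ((b r : ℚ) : ℝ) := by
    funext r
    cases r with
    | inl k =>
      show (∑ j, Ar (Sum.inl k) j * z j) = _
      by_cases h : P1 k
      · have heq : (∑ j, Ar (Sum.inl k) j * z j) = ∑ j, z j * (C j k : ℝ) := by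
          refine Finset.sum_congr rfl fun j _ => ?_
          rw [hArl k j, if_pos h, mul_comm]
        rw [heq, h]
        simp [hb]
      · have heq : (∑ j, Ar (Sum.inl k) j * z j) = 0 := by
          refine Finset.sum_eq_zero fun j _ => ?_
          rw [hArl k j, if_neg h, zero_mul]
        rw [heq]
        simp [hb]
    | inr i =>
      show (∑ j, Ar (Sum.inr i) j * z j) = _
      by_cases h : P2 i
      · have heq : (∑ j, Ar (Sum.inr i) j * z j) = z i := by
          rw [Finset.sum_eq_single i]
          · rw [hArr i i, if_pos ⟨h, rfl⟩, one_mul]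
          · intro j _ hji
            rw [hArr i j, if_neg, zero_mul]
            intro hc
            exact hji (hc.2 ▸ rfl)
          · intro hi; exact absurd (Finset.mem_univ i) hi
        rw [heq]
        simp only [hb, Sum.elim_inr, if_pos h]
        exact h
      · have heq : (∑ j, Ar (Sum.inr i) j * z j) = 0 := by
          refine Finset.sum_eq_zero fun j _ => ?_
          rw [hArr i j, if_neg (fun hc => h hc.1), zero_mul]
        rw [heq]
        simp [hb, if_neg h]
  -- kernel of the tight-constraint matrix is trivial
  have hker : ∀ d : S → ℝ, Ar.mulVec d = 0 → d = 0 := by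
    intro d hd
    have hrow1 : ∀ k, P1 k → (∑ j, d j * ((C j k : ℚ) : ℝ)) = 0 := by
      intro k hk
      have h1 := congrFun hd (Sum.inl k)
      simp only [Pi.zero_apply] at h1
      have h2 : Ar.mulVec d (Sum.inl k) = ∑ j, Ar (Sum.inl k) j * d j := rfl
      rw [h2] at h1
      rw [← h1]
      refine Finset.sum_congr rfl fun j _ => ?_
      rw [hArl k j, if_pos hk, mul_comm]
    have hrow2 : ∀ i, P2 i → d i = 0 := by
      intro i hi
      have h1 := congrFun hd (Sum.inr i)
      simp only [Pi.zero_apply] at h1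
      have h2 : Ar.mulVec d (Sum.inr i) = ∑ j, Ar (Sum.inr i) j * d j := rfl
      rw [h2] at h1
      rw [← h1]
      rw [Finset.sum_eq_single i]
      · rw [hArr i i, if_pos ⟨hi, rfl⟩, one_mul]
      · intro j _ hji
        rw [hArr i j, if_neg, zero_mul]
        intro hc
        exact hji (hc.2 ▸ rfl)
      · intro hi'; exact absurd (Finset.mem_univ i) hi'
    have hev : ∀ e : S → ℝ, (∀ k, P1 k → (∑ j, e j * ((C j k : ℚ) : ℝ)) = 0) →
        (∀ i, P2 i → e i = 0) →
        ∀ᶠ ε in nhdsWithin (0:ℝ) (Set.Ioi 0),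
          (∀ k, 0 ≤ ∑ j, (z j + ε * e j) * ((C j k : ℚ) : ℝ)) ∧
          (∀ j, ((L j : ℚ) : ℝ) ≤ z j + ε * e j) := by
      intro e he1 he2
      have hexp : ∀ (ε : ℝ) (k : S), (∑ j, (z j + ε * e j) * ((C j k : ℚ) : ℝ))
          = (∑ j, z j * ((C j k : ℚ) : ℝ)) + ε * ∑ j, e j * ((C j k : ℚ) : ℝ) := by
        intro ε k
        rw [Finset.mul_sum, ← Finset.sum_add_distrib]
        exact Finset.sum_congr rfl fun j _ => by ring
      refine Filter.Eventually.and ?_ ?_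
      · rw [Filter.eventually_all]
        intro k
        by_cases h : P1 k
        · refine Filter.Eventually.of_forall fun ε => ?_
          have hz0 : (∑ j, z j * ((C j k : ℚ) : ℝ)) = 0 := h
          rw [hexp ε k, he1 k h, hz0]
          norm_num
        · have hzk : 0 < ∑ j, z j * ((C j k : ℚ) : ℝ) :=
            lt_of_le_of_ne (hzC.1 k) (fun heq => h heq.symm)
          have htend : Filter.Tendsto
              (fun ε : ℝ => (∑ j, z j * ((C j k : ℚ) : ℝ))
                + ε * ∑ j, e j * ((C j k : ℚ) : ℝ)) (nhds 0)
              (nhds (∑ j, z j * ((C j k : ℚ) : ℝ))) := by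
            have hc : Continuous (fun ε : ℝ => (∑ j, z j * ((C j k : ℚ) : ℝ))
                + ε * ∑ j, e j * ((C j k : ℚ) : ℝ)) :=
              continuous_const.add (continuous_id.mul continuous_const)
            have := hc.tendsto 0
            simpa using this
          have hev0 := htend.eventually (lt_mem_nhds hzk)
          refine (hev0.filter_mono nhdsWithin_le_nhds).mono fun ε hε => ?_
          rw [hexp ε k]
          exact le_of_lt hε
      · rw [Filter.eventually_all]
        intro j
        by_cases h : P2 j
        · refine Filter.Eventually.of_forall fun ε => ?_
          have hz0 : z j = ((L j : ℚ) : ℝ) := h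
          rw [he2 j h, mul_zero, add_zero]
          exact le_of_eq hz0.symm
        · have hzj : ((L j : ℚ) : ℝ) < z j :=
            lt_of_le_of_ne (hzC.2 j) (fun heq => h heq.symm)
          have htend : Filter.Tendsto (fun ε : ℝ => z j + ε * e j) (nhds 0)
              (nhds (z j)) := by
            have hc : Continuous (fun ε : ℝ => z j + ε * e j) :=
              continuous_const.add (continuous_id.mul continuous_const)
            have := hc.tendsto 0
            simpa using this
          have hev0 := htend.eventually (lt_mem_nhds hzj)
          exact (hev0.filter_mono nhdsWithin_le_nhds).mono fun ε hε => le_of_lt hε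
    have hevd := hev d hrow1 hrow2
    have hevnd := hev (fun j => -(d j)) (by
        intro k hk
        have h1 := hrow1 k hk
        have h2 : (∑ j, -(d j) * ((C j k : ℚ) : ℝ))
            = -(∑ j, d j * ((C j k : ℚ) : ℝ)) := by
          rw [← Finset.sum_neg_distrib]
          exact Finset.sum_congr rfl fun j _ => by ring
        rw [h2, h1, neg_zero])
      (fun i hi => by show -(d i) = 0; rw [hrow2 i hi, neg_zero])
    obtain ⟨ε, ⟨h₁, h₂⟩, hε⟩ := ((hevd.and hevnd).and eventually_mem_nhdsWithin).exists
    have hεpos : (0:ℝ) < ε := hε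
    funext j
    have ha := hzmin _ h₁ j
    have hb2 : z j ≤ z j + ε * -(d j) := hzmin _ h₂ j
    have ha' : 0 ≤ ε * d j := by linarith
    have hmul : ε * d j = 0 := le_antisymm (by linarith) ha'
    show d j = 0
    rcases mul_eq_zero.mp hmul with h | h
    · exact absurd h hεpos.ne'
    · exact h
  -- Gram matrix argument: the real solution is rational
  set G : Matrix S S ℚ := Aᵀ * A with hG
  have hGr : G.map (fun a : ℚ => (a:ℝ)) = Arᵀ * Ar := by
    ext i j
    simp only [hG, hAr, Matrix.map_apply, Matrix.mul_apply, Matrix.transpose_apply]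
    push_cast
    rfl
  have hkerG : ∀ x : S → ℝ, (G.map (fun a : ℚ => (a:ℝ))).mulVec x = 0 → x = 0 := by
    intro x hx
    apply hker
    have h1 : x ⬝ᵥ ((G.map (fun a : ℚ => (a:ℝ))).mulVec x)
        = (Ar.mulVec x) ⬝ᵥ (Ar.mulVec x) := by
      rw [hGr, ← Matrix.mulVec_mulVec, Matrix.dotProduct_mulVec,
        Matrix.vecMul_transpose]
    rw [hx, dotProduct_zero] at h1
    exact (dotProduct_self_eq_zero).mp h1.symm
  have hdetG : IsUnit G.det := by
    rw [isUnit_iff_ne_zero]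
    intro h0
    have hdet0 : (G.map (fun a : ℚ => (a:ℝ))).det = 0 := by
      have h1 := RingHom.map_det (Rat.castHom ℝ) G
      rw [RingHom.mapMatrix_apply] at h1
      have h2 : G.map ⇑(Rat.castHom ℝ) = G.map (fun a : ℚ => (a:ℝ)) := rfl
      rw [h2] at h1
      rw [← h1, h0, map_zero]
    obtain ⟨v, hv0, hveq⟩ := (Matrix.exists_mulVec_eq_zero_iff).mpr hdet0
    exact hv0 (hkerG v hveq)
  set q : S → ℚ := (G⁻¹).mulVec (Aᵀ.mulVec b) with hq
  have hGq : G.mulVec q = Aᵀ.mulVec b := by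
    rw [hq, Matrix.mulVec_mulVec, Matrix.mul_nonsing_inv _ hdetG, Matrix.one_mulVec]
  have hqz : (fun j => ((q j : ℚ) : ℝ)) = z := by
    have h1 : (G.map (fun a : ℚ => (a:ℝ))).mulVec (fun j => ((q j : ℚ) : ℝ))
        = (G.map (fun a : ℚ => (a:ℝ))).mulVec z := by
      rw [← aux_cast_mulVec G q]
      have h2 : (fun i => ((G.mulVec q i : ℚ) : ℝ))
          = (Aᵀ.map (fun a : ℚ => (a:ℝ))).mulVec (fun r => ((b r : ℚ) : ℝ)) := by
        rw [show (fun i => ((G.mulVec q i : ℚ) : ℝ))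
            = (fun i => (((Aᵀ.mulVec b) i : ℚ) : ℝ)) from by rw [hGq]]
        exact aux_cast_mulVec Aᵀ b
      rw [h2, hGr, ← Matrix.mulVec_mulVec, hArz, hAr, Matrix.transpose_map]
    have h2 : (G.map (fun a : ℚ => (a:ℝ))).mulVec
        ((fun j => ((q j : ℚ) : ℝ)) - z) = 0 := by
      rw [Matrix.mulVec_sub, h1, sub_self]
    have h3 := hkerG _ h2
    funext j
    have h4 := congrFun h3 j
    simp only [Pi.sub_apply, Pi.zero_apply, sub_eq_zero] at h4
    exact h4
  refine ⟨q, ⟨?_, ?_⟩, ?_⟩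
  · intro k
    have h1 : ((∑ j, q j * C j k : ℚ) : ℝ) = ∑ j, z j * ((C j k : ℚ) : ℝ) := by
      rw [hdomcast]
      exact Finset.sum_congr rfl fun j _ => by rw [← congrFun hqz j]
    have h2 := hzC.1 k
    rw [← h1] at h2
    exact_mod_cast h2
  · intro j
    have h2 := hzC.2 j
    rw [← congrFun hqz j] at h2
    exact_mod_cast h2
  · intro y hy j
    have hyr : (∀ k, 0 ≤ ∑ jj, ((y jj : ℚ) : ℝ) * ((C jj k : ℚ) : ℝ)) ∧
        ∀ jj, ((L jj : ℚ) : ℝ) ≤ ((y jj : ℚ) : ℝ) := by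
      constructor
      · intro k
        rw [← hdomcast]
        exact_mod_cast hy.1 k
      · intro jj
        exact_mod_cast hy.2 jj
    have h2 := hzmin _ hyr j
    rw [← congrFun hqz j] at h2
    exact_mod_cast h2




open Classical in
/-- Combinatorial form of the existence of a unique minimal element of `C_{≥E}`.
Vectors of the coweight space are written in coordinates with respect to the
simple coroots, so `y : S → ℚ` stands for `∑ j, y j • α_j^∨`; the dominance order
is then the entrywise order, dominance of `y` means `∑ j, y j * C j k ≥ 0` for all
`k` (`C` the Cartan matrix, assumed σ-equivariant, of finite type:
symmetrizable positive definite with diagonal `2` and nonpositive off-diagonal),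
and `W i` gives the coroot coordinates of the fundamental coweight `ω_i^∨`
(characterized by `∑ j, W i j * C j k = δ_{i k}`). A dominant coweight `μ` is
given by its coroot coordinates `mu`. With `t i = max{0, ⟨μ, ω_{𝒪_i}⟩ − 1}/#𝒪_i`
and `e_i = t i • ω_i^∨`, the set `C_{≥E}` of σ-invariant dominant vectors `y`
with `y ≥ e_i` for all `i` has a unique minimal element. -/
theorem stmt15 {S : Type*} [Fintype S] [DecidableEq S]
    (σ : Equiv.Perm S) (C : S → S → ℚ)
    (hCσ : ∀ i j, C (σ i) (σ j) = C i j)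
    (hCdiag : ∀ i, C i i = 2)
    (hCoff : ∀ i j, i ≠ j → C i j ≤ 0)
    (ds : S → ℚ) (hds : ∀ i, 0 < ds i)
    (hCsymm : ∀ i j, ds i * C i j = ds j * C j i)
    (hCposdef : ∀ x : S → ℚ, x ≠ 0 → 0 < ∑ i, ∑ j, ds i * C i j * x i * x j)
    (W : S → S → ℚ) (hW : ∀ i k, (∑ j, W i j * C j k) = if i = k then 1 else 0)
    (mu : S → ℚ) (hmu : ∀ k, 0 ≤ ∑ j, mu j * C j k) :
    let orb : S → Finset S := fun i => Finset.univ.filter fun j => σ.SameCycle i j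
    let t : S → ℚ := fun i => max 0 ((∑ j ∈ orb i, mu j) - 1) / (orb i).card
    let CgeE : Set (S → ℚ) := {y | (∀ i, y (σ i) = y i) ∧
      (∀ k, 0 ≤ ∑ j, y j * C j k) ∧ ∀ i j, t i * W i j ≤ y j}
    ∃! y₀, y₀ ∈ CgeE ∧ ∀ y ∈ CgeE, ∀ j, y₀ j ≤ y j := by
  intro orb t CgeE
  classical
  rcases isEmpty_or_nonempty S with hS | hS
  · refine ⟨fun _ => 0, ⟨⟨fun i => isEmptyElim i, fun k => isEmptyElim k,
      fun i => isEmptyElim i⟩, fun y _ j => isEmptyElim j⟩, ?_⟩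
    intro y _
    funext j
    exact isEmptyElim j
  · obtain ⟨hWnn, hWdiag, hrowker⟩ := aux_W C hCoff ds hds hCsymm hCposdef W hW
    have hWσ : ∀ i j, W (σ i) (σ j) = W i j := by
      intro i j
      have key : ∀ k, ∑ l, (W (σ i) (σ l) - W i l) * C l k = 0 := by
        intro k
        have h1 : ∑ l, W (σ i) (σ l) * C l k = if i = k then 1 else 0 := by
          calc ∑ l, W (σ i) (σ l) * C l k
              = ∑ l, W (σ i) (σ l) * C (σ l) (σ k) :=
                Finset.sum_congr rfl fun l _ => by rw [hCσ]
            _ = ∑ l, W (σ i) l * C l (σ k) :=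
                Fintype.sum_equiv σ _ _ fun l => rfl
            _ = if σ i = σ k then 1 else 0 := hW (σ i) (σ k)
            _ = if i = k then 1 else 0 := by
                by_cases h : i = k
                · simp [h]
                · rw [if_neg h, if_neg fun hc => h (σ.injective hc)]
        have h2 : ∑ l, (W (σ i) (σ l) - W i l) * C l k
            = (∑ l, W (σ i) (σ l) * C l k) - ∑ l, W i l * C l k := by
          rw [← Finset.sum_sub_distrib]
          exact Finset.sum_congr rfl fun l _ => by ring
        rw [h2, h1, hW i k, sub_self]
      have h3 := hrowker _ key
      have h4 := congrFun h3 j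
      simpa [sub_eq_zero] using h4
    have horb : ∀ i, orb (σ i) = orb i := by
      intro i
      have hcyc : σ.SameCycle i (σ i) := ⟨1, by simp⟩
      show Finset.univ.filter (fun j => σ.SameCycle (σ i) j)
          = Finset.univ.filter fun j => σ.SameCycle i j
      ext j
      simp only [Finset.mem_filter, Finset.mem_univ, true_and]
      exact ⟨fun h => hcyc.trans h, fun h => hcyc.symm.trans h⟩
    have htσ : ∀ i, t (σ i) = t i := by
      intro i
      show max 0 ((∑ j ∈ orb (σ i), mu j) - 1) / ((orb (σ i)).card : ℚ)
          = max 0 ((∑ j ∈ orb i, mu j) - 1) / ((orb i).card : ℚ)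
      rw [horb i]
    haveI : Nonempty S := hS
    set L : S → ℚ := fun j => Finset.univ.sup' Finset.univ_nonempty
      (fun i => t i * W i j) with hL
    have hLle : ∀ i j, t i * W i j ≤ L j := by
      intro i j
      rw [hL]
      exact Finset.le_sup' (fun i => t i * W i j) (Finset.mem_univ i)
    have hLub : ∀ j (c : ℚ), (∀ i, t i * W i j ≤ c) → L j ≤ c := by
      intro j c h
      rw [hL]
      exact Finset.sup'_le _ _ fun i _ => h i
    have hLσ : ∀ j, L (σ j) = L j := by
      intro j
      apply le_antisymm
      · apply hLub
        intro i
        have h1 : t i * W i (σ j) = t (σ⁻¹ i) * W (σ⁻¹ i) j := by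
          rw [show W i (σ j) = W (σ⁻¹ i) j from by
              rw [← hWσ (σ⁻¹ i) j, Equiv.Perm.inv_def, Equiv.apply_symm_apply],
            show t i = t (σ⁻¹ i) from by
              rw [← htσ (σ⁻¹ i), Equiv.Perm.inv_def, Equiv.apply_symm_apply]]
        rw [h1]
        exact hLle _ _
      · apply hLub
        intro i
        have h1 : t i * W i j = t (σ i) * W (σ i) (σ j) := by rw [htσ, hWσ]
        rw [h1]
        exact hLle _ _
    set ρ : S → ℚ := fun j => ∑ i, W i j with hρ
    have hρpos : ∀ j, 0 < ρ j := by
      intro j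
      have h1 : W j j ≤ ρ j := by
        rw [hρ]
        exact Finset.single_le_sum (f := fun i => W i j) (fun i _ => hWnn i j)
          (Finset.mem_univ j)
      linarith [hWdiag j]
    have hρdom : ∀ k, ∑ j, ρ j * C j k = 1 := by
      intro k
      have h1 : ∑ j, ρ j * C j k = ∑ i, ∑ j, W i j * C j k := by
        rw [hρ]
        calc ∑ j, (∑ i, W i j) * C j k = ∑ j, ∑ i, W i j * C j k :=
              Finset.sum_congr rfl fun j _ => Finset.sum_mul _ _ _
          _ = ∑ i, ∑ j, W i j * C j k := Finset.sum_comm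
      rw [h1]
      simp [hW]
    set c : ℚ := max 0 (Finset.univ.sup' Finset.univ_nonempty
      (fun j => L j / ρ j)) with hc
    have hc0 : 0 ≤ c := le_max_left _ _
    have hy1dom : ∀ k, 0 ≤ ∑ j, (c * ρ j) * C j k := by
      intro k
      have h1 : ∑ j, (c * ρ j) * C j k = c * ∑ j, ρ j * C j k := by
        rw [Finset.mul_sum]
        exact Finset.sum_congr rfl fun j _ => by ring
      rw [h1, hρdom k, mul_one]
      exact hc0
    have hy1b : ∀ j, L j ≤ c * ρ j := by
      intro j
      have h1 : L j / ρ j ≤ c := by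
        rw [hc]
        exact le_trans (Finset.le_sup' (fun j => L j / ρ j) (Finset.mem_univ j))
          (le_max_right _ _)
      calc L j = (L j / ρ j) * ρ j := by rw [div_mul_cancel₀ _ (hρpos j).ne']
        _ ≤ c * ρ j := mul_le_mul_of_nonneg_right h1 (hρpos j).le
    obtain ⟨q, ⟨hqdom, hqb⟩, hqmin⟩ :=
      aux_rat C L hCoff (fun j => c * ρ j) ⟨hy1dom, hy1b⟩
    have hqσstep : ∀ j, q j ≤ q (σ j) := by
      intro j
      have hmem : (∀ k, 0 ≤ ∑ l, q (σ l) * C l k) ∧ ∀ l, L l ≤ q (σ l) := by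
        constructor
        · intro k
          have h1 : ∑ l, q (σ l) * C l k = ∑ l, q l * C l (σ k) := by
            calc ∑ l, q (σ l) * C l k
                = ∑ l, q (σ l) * C (σ l) (σ k) :=
                  Finset.sum_congr rfl fun l _ => by rw [hCσ]
              _ = ∑ l, q l * C l (σ k) := Fintype.sum_equiv σ _ _ fun l => rfl
          rw [h1]
          exact hqdom (σ k)
        · intro l
          rw [← hLσ l]
          exact hqb (σ l)
      exact hqmin _ hmem j
    have hqσ : ∀ j, q (σ j) = q j := by
      have hiter : ∀ (m : ℕ) j, q j ≤ q ((σ ^ m) j) := by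
        intro m
        induction m with
        | zero => intro j; simp
        | succ m ih =>
          intro j
          have h1 : (σ ^ (m + 1)) j = (σ ^ m) (σ j) := by
            rw [pow_succ]
            rfl
          rw [h1]
          exact le_trans (hqσstep j) (ih (σ j))
      intro j
      refine le_antisymm ?_ (hqσstep j)
      have hn := orderOf_pos σ
      have h2 := hiter (orderOf σ - 1) (σ j)
      have h3 : (σ ^ (orderOf σ - 1)) (σ j) = j := by
        have h4 : (σ ^ (orderOf σ - 1)) (σ j) = (σ ^ (orderOf σ - 1) * σ) j := rfl
        rw [h4, ← pow_succ, Nat.sub_add_cancel hn, pow_orderOf_eq_one]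
        rfl
      rwa [h3] at h2
    have hqmem : q ∈ CgeE :=
      ⟨hqσ, hqdom, fun i j => le_trans (hLle i j) (hqb j)⟩
    refine ⟨q, ⟨hqmem, ?_⟩, ?_⟩
    · intro y hy j
      exact hqmin y ⟨hy.2.1, fun l => hLub l (y l) fun i => hy.2.2 i l⟩ j
    · intro y hy
      funext j
      have h1 := hy.2 q hqmem j
      have h2 := hqmin y ⟨hy.1.2.1, fun l => hLub l (y l) fun i => hy.1.2.2 i l⟩ j
      exact le_antisymm h1 h2
end
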